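/- There is no continuous function f : S² → ℂ \ {0} such that f(-x) · conj(f(x)) = -1 for every x ∈ S². -/

import Mathlib

/-!
Inverse stereographic projection from a pole `v` parametrises the sphere by the plane `(ℝ ∙ v)ᗮ`,
which is simply connected, so `f ∘ stereoInvFun = exp ∘ θ` for a continuous `θ`. It maps the
circle `‖w‖ = 2` onto the equator, with `w ↦ -w` becoming the antipodal map. There
`d w = θ (-w) + conj (θ w)` satisfies `exp d = -1` and `d (-w) = conj (d w)`, so `exp (d / 2)` is a
continuous square root of `-1` on a connected set, hence constantly `I` or constantly `-I`; but
`w ↦ -w` replaces it by its conjugate.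
-/

open Complex ComplexConjugate Metric Module

theorem Continuous.exists_continuous_exp_eq {A : Type*} [TopologicalSpace A]
    [SimplyConnectedSpace A] [LocallyPathConnectedSpace A] {f : A → ℂ} (hf : Continuous f)
    (hne : ∀ a, f a ≠ 0) : ∃ θ : A → ℂ, Continuous θ ∧ ∀ a, exp (θ a) = f a := by
  obtain ⟨a₀⟩ : Nonempty A := inferInstance
  obtain ⟨θ, ⟨-, hθ⟩, -⟩ := isCoveringMapOn_exp.existsUnique_continuousMap_lifts ⟨f, hf⟩
    (exp_log (hne a₀)) hne
  exact ⟨θ, θ.continuous, congrFun hθ⟩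

theorem IsConnected.not_forall_exp_neg_mul_conj_exp_eq_neg_one {X : Type*}
    [TopologicalSpace X] [InvolutiveNeg X] [ContinuousNeg X] {S : Set X}
    (hS : IsConnected S) (hS_neg : ∀ x ∈ S, -x ∈ S)
    {θ : X → ℂ} (hθ : ContinuousOn θ S) :
    ¬ ∀ x ∈ S, exp (θ (-x)) * conj (exp (θ x)) = -1 := by
  intro h
  obtain ⟨x₀, hx₀⟩ := hS.nonempty
  set e : X → ℂ := fun x ↦ exp ((θ (-x) + conj (θ x)) / 2)
  have he_cont : ContinuousOn e S := by
    have hθ_neg : ContinuousOn (fun x ↦ θ (-x)) S := hθ.comp continuous_neg.continuousOn hS_neg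
    exact continuous_exp.comp_continuousOn
      ((hθ_neg.add (continuous_conj.comp_continuousOn hθ)).div_const 2)
  have he_sq : Set.EqOn (e ^ 2) ((fun _ ↦ I) ^ 2) S := fun x hx ↦ by
    simp only [Pi.pow_apply, e, ← exp_nat_mul, I_sq]
    rw [← h x hx, ← exp_conj, ← exp_add]
    ring_nf
  have he_neg : ∀ x, e (-x) = conj (e x) := fun x ↦ by
    simp only [e, neg_neg, ← exp_conj, map_div₀, map_add, conj_conj, map_ofNat, add_comm]
  rcases hS.isPreconnected.eq_or_eq_neg_of_sq_eq he_cont continuousOn_const he_sq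
    (fun _ ↦ I_ne_zero) with hI | hI <;>
  · have := he_neg x₀
    rw [hI hx₀, hI (hS_neg x₀ hx₀)] at this
    norm_num [conj_I, Complex.ext_iff] at this

section Stereographic

variable {E : Type*} [NormedAddCommGroup E] [InnerProductSpace ℝ E] {v : E}

theorem stereoInvFun_neg_of_norm_eq_two (hv : ‖v‖ = 1) {w : (ℝ ∙ v)ᗮ} (hw : ‖w‖ = 2) :
    stereoInvFun hv (-w) = -stereoInvFun hv w := by
  ext1
  norm_num [hw, coe_neg_sphere]

theorem isConnected_sphere_orthogonal_span_singleton [FiniteDimensional ℝ E]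
    (hE : 2 < finrank ℝ E) (hv : v ≠ 0) {r : ℝ} (hr : 0 ≤ r) :
    IsConnected (sphere (0 : (ℝ ∙ v)ᗮ) r) := by
  refine isConnected_sphere ?_ 0 hr
  have := Submodule.finrank_add_finrank_orthogonal (ℝ ∙ v)
  rw [finrank_span_singleton hv] at this
  rw [← finrank_eq_rank]
  exact_mod_cast (by omega : 1 < finrank ℝ (ℝ ∙ v)ᗮ)

end Stereographic

/-- There is no continuous function `f : S² → ℂ \ {0}` such that
`f (-x) * conj (f x) = -1` for every `x ∈ S²`. -/
theorem no_antilinear_square_neg_one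
    (f : Metric.sphere (0 : EuclideanSpace ℝ (Fin 3)) 1 → ℂ)
    (hf : Continuous f)
    (hne : ∀ x, f x ≠ 0)
    (h : ∀ x, f (-x) * (starRingEnd ℂ) (f x) = -1) : False := by
  set v : EuclideanSpace ℝ (Fin 3) := EuclideanSpace.single 0 1
  have hv : ‖v‖ = 1 := by simp [v]
  obtain ⟨θ, hθ, hθf⟩ :=
    (hf.comp (continuous_stereoInvFun hv)).exists_continuous_exp_eq fun _ ↦ hne _
  have hS : IsConnected (sphere (0 : (ℝ ∙ v)ᗮ) 2) :=
    isConnected_sphere_orthogonal_span_singleton (by simp) (by simp [v]) zero_le_two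
  refine hS.not_forall_exp_neg_mul_conj_exp_eq_neg_one (fun w hw ↦ by simpa using hw)
    hθ.continuousOn fun w hw ↦ ?_
  simp only [hθf, Function.comp_apply,
    stereoInvFun_neg_of_norm_eq_two hv (mem_sphere_zero_iff_norm.1 hw), h]
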